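/- arXiv:2406.12610 — 3 statements merged into one kernel-verified Lean document; each statement's English description precedes it below -/
import Mathlib

section
/- An endofunction is an inversion sequence if and only if it is a d-ascent sequence for some d ≥ 0; that is, I = ⋃_{d≥0} A_d. In particular, every d-ascent sequence is an inversion sequence, and every inversion sequence of length n is an n-ascent sequence. -/
/-- Entry of the word `w` at (1-based) position `i`. -/
def ent (w : List ℕ) (i : ℕ) : ℕ := w.getD (i - 1) 0

/-- `w` is an endofunction of `{1,…,n}`, where `n = w.length`. -/
def IsEndo (w : List ℕ) : Prop := ∀ x ∈ w, 1 ≤ x ∧ x ≤ w.length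

/-- `w` is an inversion sequence. -/
def IsInvSeq (w : List ℕ) : Prop :=
  ∀ i ∈ Finset.Icc 1 w.length, 1 ≤ ent w i ∧ ent w i ≤ i

/-- The set of `d`-ascents of `w` (1-based positions): position `1` is always a
`d`-ascent, and `i ≥ 2` is a `d`-ascent if `a_i > a_{i-1} - d`. -/
def ascSet (d : ℕ) (w : List ℕ) : Finset ℕ :=
  (Finset.Icc 1 w.length).filter fun i => i = 1 ∨ ent w (i - 1) < ent w i + d

/-- The number of `d`-ascents of `w`. -/
def ascCard (d : ℕ) (w : List ℕ) : ℕ := (ascSet d w).card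

/-- `w` is a `d`-ascent sequence. -/
def IsDAscSeq (d : ℕ) (w : List ℕ) : Prop :=
  IsEndo w ∧ ∀ i ∈ Finset.Icc 1 w.length, ent w i ≤ 1 + ascCard d (w.take (i - 1))

/-- One step of the map `M`: add one to every entry strictly to the left of
position `j` that is weakly larger than the entry in position `j`. -/
def Mstep (w : List ℕ) (j : ℕ) : List ℕ :=
  w.mapIdx fun k x => if k + 1 < j ∧ ent w j ≤ x then x + 1 else x

/-- The `d`-hat map: apply `Mstep` successively at the `d`-ascents of `w`,
listed in increasing order. -/
def hatd (d : ℕ) (w : List ℕ) : List ℕ :=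
  ((ascSet d w).sort (· ≤ ·)).foldl Mstep w

/-- Largest entry of `w`. -/
def maxEnt (w : List ℕ) : ℕ := w.foldr max 0

/-- `w` is a Cayley permutation: its image is `{1,…,max w}`. -/
def IsCayley (w : List ℕ) : Prop := ∀ x, x ∈ w ↔ (1 ≤ x ∧ x ≤ maxEnt w)

open Classical in
/-- The set of positions of leftmost copies of the values of `w`. -/
noncomputable def nubSet (w : List ℕ) : Finset ℕ :=
  (Finset.Icc 1 w.length).filter fun i =>
    ∀ j ∈ Finset.Icc 1 w.length, ent w j = ent w i → i ≤ j

/-- The least `d` such that `w` is a `d`-ascent sequence. -/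
noncomputable def mind (w : List ℕ) : ℕ := sInf {d | IsDAscSeq d w}

/-- The set `H(w)` of all the (meaningful) `d`-hats of `w`. -/
def Hset (w : List ℕ) : Set (List ℕ) := {x | ∃ d, mind w ≤ d ∧ x = hatd d w}

/-- The max-hat map. -/
def hatmax (w : List ℕ) : List ℕ := hatd (w.length - 1) w

/-- Weak descent set of `w`. -/
def wDesSet (w : List ℕ) : Finset ℕ :=
  (Finset.Icc 2 w.length).filter fun i => ent w i ≤ ent w (i - 1)

/-- The number of weak descents of `w`. -/
def wdes (w : List ℕ) : ℕ := (wDesSet w).card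

/-- `i` is a right-left minimum index of `w`. -/
def IsRLMinIdx (w : List ℕ) (i : ℕ) : Prop :=
  1 ≤ i ∧ i ≤ w.length ∧ ∀ j, i < j → j ≤ w.length → ent w i < ent w j

/-- The set of right-left minima pairs of `w`. -/
def rlMinP (w : List ℕ) : Set (ℕ × ℕ) :=
  {p | IsRLMinIdx w p.1 ∧ p.2 = ent w p.1}

/-- `w` is the word of a permutation of `{1,…,n}`, where `n = w.length`. -/
def IsPermWord (w : List ℕ) : Prop :=
  w.Nodup ∧ ∀ x ∈ w, 1 ≤ x ∧ x ≤ w.length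

/-- Add one to every entry of `w` that is `≥ a`. -/
def plus (w : List ℕ) (a : ℕ) : List ℕ :=
  w.map fun x => if a ≤ x then x + 1 else x

/-- Add one to every entry of `w` that is `≥ a`, then append `a` at the end. -/
def plusApp (w : List ℕ) (a : ℕ) : List ℕ := plus w a ++ [a]

/-- The index of the maximal increasing run of `w` containing position `i`:
one plus the number of descents up to position `i`. -/
def irIdx (w : List ℕ) (i : ℕ) : ℕ :=
  1 + ((Finset.Icc 2 i).filter fun j => ent w j < ent w (j - 1)).card

/-- `w` is ir-subdiagonal: every entry `c` in the `i`th maximal increasing run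
satisfies `c ≤ n + 1 - i`. -/
def IsIrSub (w : List ℕ) : Prop :=
  ∀ i ∈ Finset.Icc 1 w.length, ent w i + irIdx w i ≤ w.length + 1

/-- The index of the maximal decreasing run of `w` containing position `i`. -/
def drIdx (w : List ℕ) (i : ℕ) : ℕ :=
  1 + ((Finset.Icc 2 i).filter fun j => ent w (j - 1) < ent w j).card

/-- `w` is dr-subdiagonal: every entry `c` in the `i`th maximal decreasing run
satisfies `c ≤ n + 1 - i`. -/
def IsDrSub (w : List ℕ) : Prop :=
  ∀ i ∈ Finset.Icc 1 w.length, ent w i + drIdx w i ≤ w.length + 1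

/-- `w` is a weak descent sequence. -/
def IsWDesSeq (w : List ℕ) : Prop :=
  IsInvSeq w ∧ ∀ i ∈ Finset.Icc 1 w.length, ent w i ≤ 1 + wdes (w.take (i - 1))

/-- `w` is a primitive ascent sequence: an ascent sequence with no flat steps. -/
def IsPrimAscSeq (w : List ℕ) : Prop :=
  IsDAscSeq 0 w ∧ ∀ i ∈ Finset.Icc 1 (w.length - 1), ent w i ≠ ent w (i + 1)

/-- Insert position `i` into a list of positions sorted by the Burge order:
ascending entries, ties broken by descending position. -/
def bInsert (w : List ℕ) (i : ℕ) : List ℕ → List ℕ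
  | [] => [i]
  | j :: t =>
      if ent w i < ent w j ∨ (ent w i = ent w j ∧ j ≤ i) then i :: j :: t
      else j :: bInsert w i t

/-- The permutation `burget w` obtained from the Burge transpose of the biword
with top row `1,…,n` and bottom row `w`: sort the positions `1,…,n` in
ascending order of their entries, breaking ties in descending order of
position. -/
def burget (w : List ℕ) : List ℕ :=
  ((List.range w.length).map (· + 1)).foldr (bInsert w) []

lemma ent_mem (w : List ℕ) (i : ℕ) (h1 : 1 ≤ i) (h2 : i ≤ w.length) : ent w i ∈ w := by
  unfold ent
  rw [List.getD_eq_getElem _ _ (by omega)]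
  exact List.getElem_mem _

lemma ent_take (w : List ℕ) (m i : ℕ) (h1 : 1 ≤ i) (h2 : i ≤ m) (h3 : i ≤ w.length) :
    ent (w.take m) i = ent w i := by
  unfold ent
  rw [List.getD_eq_getElem _ _ (by simp [List.length_take]; omega),
      List.getD_eq_getElem _ _ (by omega), List.getElem_take]

lemma ascCard_le (d : ℕ) (t : List ℕ) : ascCard d t ≤ t.length := by
  unfold ascCard ascSet
  calc _ ≤ (Finset.Icc 1 t.length).card := Finset.card_filter_le _ _
    _ = t.length := by rw [Nat.card_Icc]; omega

lemma dasc_inv (d : ℕ) (w : List ℕ) (h : IsDAscSeq d w) : IsInvSeq w := by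
  obtain ⟨hendo, hbd⟩ := h
  intro i hi
  rw [Finset.mem_Icc] at hi
  constructor
  · exact (hendo _ (ent_mem w i hi.1 hi.2)).1
  · have h1 := hbd i (Finset.mem_Icc.mpr hi)
    have h2 := ascCard_le d (w.take (i - 1))
    rw [List.length_take] at h2
    omega

lemma inv_dasc (w : List ℕ) (h : IsInvSeq w) : IsDAscSeq w.length w := by
  constructor
  · intro x hx
    obtain ⟨k, hk, rfl⟩ := List.getElem_of_mem hx
    have := h (k + 1) (Finset.mem_Icc.mpr ⟨by omega, by omega⟩)
    have he : ent w (k + 1) = w[k] := by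
      unfold ent; rw [List.getD_eq_getElem _ _ (by omega)]; simp
    rw [he] at this
    exact ⟨this.1, by omega⟩
  · intro i hi
    rw [Finset.mem_Icc] at hi
    have hcard : ascCard w.length (w.take (i - 1)) = i - 1 := by
      unfold ascCard ascSet
      rw [Finset.filter_true_of_mem, List.length_take, Nat.card_Icc]
      · omega
      · intro j hj
        rw [List.length_take, Finset.mem_Icc] at hj
        rcases Nat.eq_or_lt_of_le hj.1 with h1 | h1
        · exact Or.inl h1.symm
        · right
          have hj2 : j ≤ i - 1 := by omega
          have e1 : ent (w.take (i - 1)) j = ent w j :=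
            ent_take w _ j (by omega) hj2 (by omega)
          have e2 : ent (w.take (i - 1)) (j - 1) = ent w (j - 1) :=
            ent_take w _ (j - 1) (by omega) (by omega) (by omega)
          rw [e1, e2]
          have b1 := h (j - 1) (Finset.mem_Icc.mpr ⟨by omega, by omega⟩)
          have b2 := h j (Finset.mem_Icc.mpr ⟨by omega, by omega⟩)
          omega
    rw [hcard]
    have := h i (Finset.mem_Icc.mpr hi)
    omega

/-- `I = ⋃_{d ≥ 0} A_d`; in particular every `d`-ascent sequence is
an inversion sequence, and every inversion sequence of length `n` is an
`n`-ascent sequence. -/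
theorem stmt0 :
    (∀ w : List ℕ, IsInvSeq w ↔ ∃ d : ℕ, IsDAscSeq d w) ∧
    (∀ (d : ℕ) (w : List ℕ), IsDAscSeq d w → IsInvSeq w) ∧
    (∀ w : List ℕ, IsInvSeq w → IsDAscSeq w.length w) := by
  refine ⟨fun w => ⟨fun h => ⟨w.length, inv_dasc w h⟩, fun ⟨d, h⟩ => dasc_inv d w h⟩,
    dasc_inv, inv_dasc⟩
end

section
/- Let d ≥ 0, n ≥ 2, and let α = a_1⋯a_n be a d-ascent sequence; write hat_d(α) = a′_1⋯a′_n. Then (a′_{n−1}, a′_n) = (a_{n−1}+1, a_n) if a_{n−1} − d < a_n ≤ a_{n−1}, and (a′_{n−1}, a′_n) = (a_{n−1}, a_n) otherwise. -/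
lemma Mstep_length (w : List ℕ) (j : ℕ) : (Mstep w j).length = w.length :=
  List.length_mapIdx

lemma ent_Mstep (w : List ℕ) (j i : ℕ) (hi : 1 ≤ i) (hin : i ≤ w.length) :
    ent (Mstep w j) i = if i < j ∧ ent w j ≤ ent w i then ent w i + 1 else ent w i := by
  have hlt : i - 1 < w.length := by omega
  have h1 : i - 1 + 1 = i := by omega
  simp only [ent, Mstep, List.getD_eq_getElem?_getD, List.getElem?_mapIdx,
    List.getElem?_eq_getElem hlt, Option.map_some, Option.getD_some, h1]

lemma fold_ent (n : ℕ) (hn : 2 ≤ n) (L : List ℕ) :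
    ∀ w : List ℕ, L.Pairwise (· < ·) → w.length = n → (∀ j ∈ L, j ≤ n) →
    (L.foldl Mstep w).length = n ∧
    ent (L.foldl Mstep w) n = ent w n ∧
    ent (L.foldl Mstep w) (n - 1) =
      (if n ∈ L ∧ ent w n ≤ ent w (n - 1) then ent w (n - 1) + 1 else ent w (n - 1)) := by
  induction L with
  | nil => intro w _ hw _; simp [hw]
  | cons j t ih =>
    intro w hL hw hle
    have hjn : j ≤ n := hle j List.mem_cons_self
    have hts : t.Pairwise (· < ·) := hL.of_cons
    rcases Nat.lt_or_ge j n with hj | hj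
    · -- j < n : this step leaves positions n-1 and n untouched
      simp only [List.foldl_cons]
      have h1 : (Mstep w j).length = n := by rw [Mstep_length, hw]
      have h2 : ∀ k ∈ t, k ≤ n := fun k hk => hle k (List.mem_cons_of_mem _ hk)
      have e1 : ent (Mstep w j) n = ent w n := by
        rw [ent_Mstep w j n (by omega) (by omega), if_neg (by omega)]
      have e2 : ent (Mstep w j) (n - 1) = ent w (n - 1) := by
        rw [ent_Mstep w j (n - 1) (by omega) (by omega), if_neg (by omega)]
      obtain ⟨l1, l2, l3⟩ := ih (Mstep w j) hts h1 h2
      refine ⟨l1, by rw [l2, e1], ?_⟩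
      rw [l3, e1, e2]
      have hmem : (n ∈ t) = (n ∈ j :: t) := by
        simp only [List.mem_cons, eq_iff_iff]
        constructor
        · exact Or.inr
        · rintro (h | h)
          · omega
          · exact h
      simp only [hmem]
    · -- j = n : then t = [] and this is the only relevant step
      have hjn' : j = n := by omega
      subst hjn'
      have ht : t = [] := by
        rcases t with _ | ⟨k, t'⟩
        · rfl
        · exfalso
          have hk := hle k (by simp)
          have hk' := List.rel_of_pairwise_cons hL (a' := k) (by simp)
          omega
      subst ht
      simp only [List.foldl_cons, List.foldl_nil, List.mem_singleton]
      refine ⟨by rw [Mstep_length, hw], ?_, ?_⟩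
      · rw [ent_Mstep w j j (by omega) (by omega), if_neg (by omega)]
      · rw [ent_Mstep w j (j - 1) (by omega) (by omega)]
        have e : (j - 1 < j ∧ ent w j ≤ ent w (j - 1)) ↔
            (j = j ∧ ent w j ≤ ent w (j - 1)) := by
          constructor
          · exact fun h => ⟨rfl, h.2⟩
          · exact fun h => ⟨by omega, h.2⟩
        simp only [e]

/-- the behavior of `hat_d` on the last two letters of a
`d`-ascent sequence. -/
theorem stmt2 (d n : ℕ) (hn : 2 ≤ n) (w : List ℕ) (hw : IsDAscSeq d w)
    (hlen : w.length = n) :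
    (ent (hatd d w) (n - 1), ent (hatd d w) n) =
      (if ent w (n - 1) < ent w n + d ∧ ent w n ≤ ent w (n - 1)
       then (ent w (n - 1) + 1, ent w n)
       else (ent w (n - 1), ent w n)) := by
  subst hlen
  set L := (ascSet d w).sort (· ≤ ·) with hLdef
  have hsort : L.Pairwise (· < ·) := (Finset.sortedLT_sort _).pairwise
  have hle : ∀ j ∈ L, j ≤ w.length := by
    intro j hj
    have hj' := (Finset.mem_sort _).mp hj
    simp only [ascSet, Finset.mem_filter, Finset.mem_Icc] at hj'
    exact hj'.1.2
  obtain ⟨_, h2, h3⟩ := fold_ent w.length hn L w hsort rfl hle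
  have hmem : (w.length ∈ L) ↔ (ent w (w.length - 1) < ent w w.length + d) := by
    rw [hLdef, Finset.mem_sort]
    simp only [ascSet, Finset.mem_filter, Finset.mem_Icc]
    constructor
    · rintro ⟨-, h | h⟩
      · omega
      · exact h
    · intro h
      exact ⟨⟨by omega, le_refl _⟩, Or.inr h⟩
  show (ent (L.foldl Mstep w) _, ent (L.foldl Mstep w) _) = _
  rw [h2, h3]
  by_cases hA : ent w (w.length - 1) < ent w w.length + d ∧
      ent w w.length ≤ ent w (w.length - 1)
  · rw [if_pos hA, if_pos ⟨hmem.mpr hA.1, hA.2⟩]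
  · rw [if_neg hA, if_neg (fun h => hA ⟨hmem.mp h.1, h.2⟩)]
end

section
/- For every d ≥ 0 and every modified d-ascent sequence γ (i.e. γ = hat_d(α) for some d-ascent sequence α), we have Asc_d(γ) ⊆ nub(γ). -/
-- basic lemmas
lemma ent_eq (w : List ℕ) (i : ℕ) : ent w i = w[i-1]?.getD 0 := by
  simp [ent, List.getD_eq_getElem?_getD]

@[simp] lemma length_Mstep (v : List ℕ) (j : ℕ) : (Mstep v j).length = v.length := by
  simp [Mstep]

lemma length_foldl_Mstep (l : List ℕ) (v : List ℕ) : (l.foldl Mstep v).length = v.length := by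
  induction l generalizing v with
  | nil => rfl
  | cons j t ih => simp [ih, length_Mstep]

@[simp] lemma length_hatd (d : ℕ) (w : List ℕ) : (hatd d w).length = w.length :=
  length_foldl_Mstep _ _

lemma ent_Mstep_ge (v : List ℕ) (j i : ℕ) (h : j ≤ i) : ent (Mstep v j) i = ent v i := by
  rw [ent_eq, ent_eq, Mstep, List.getElem?_mapIdx]
  rcases h' : v[i-1]? with _ | x
  · rfl
  · simp only [Option.map_some, Option.getD_some]
    have : ¬ (i - 1 + 1 < j) := by omega
    simp [this]

lemma ent_foldl_Mstep (l : List ℕ) (v : List ℕ) (i : ℕ) (h : ∀ j ∈ l, j ≤ i) :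
    ent (l.foldl Mstep v) i = ent v i := by
  induction l generalizing v with
  | nil => rfl
  | cons j t ih =>
    simp only [List.foldl_cons]
    rw [ih _ fun j hj => h j (List.mem_cons_of_mem _ hj),
      ent_Mstep_ge _ _ _ (h j List.mem_cons_self)]

lemma ent_append_le (v : List ℕ) (a : ℕ) (i : ℕ) (h1 : 1 ≤ i) (h2 : i ≤ v.length) :
    ent (v ++ [a]) i = ent v i := by
  rw [ent_eq, ent_eq, List.getElem?_append_left (by omega)]

lemma ent_append_last (v : List ℕ) (a : ℕ) : ent (v ++ [a]) (v.length + 1) = a := by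
  rw [ent_eq, List.getElem?_append_right (by omega)]
  simp

lemma mem_ascSet (d : ℕ) (w : List ℕ) (i : ℕ) :
    i ∈ ascSet d w ↔ (1 ≤ i ∧ i ≤ w.length) ∧ (i = 1 ∨ ent w (i-1) < ent w i + d) := by
  simp [ascSet, Finset.mem_filter, Finset.mem_Icc, and_assoc]

lemma mem_nubSet (w : List ℕ) (i : ℕ) :
    i ∈ nubSet w ↔ (1 ≤ i ∧ i ≤ w.length) ∧
      ∀ j, 1 ≤ j → j ≤ w.length → ent w j = ent w i → i ≤ j := by
  simp [nubSet, Finset.mem_filter, Finset.mem_Icc, and_assoc]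

lemma ascSet_le (d : ℕ) (w : List ℕ) (j : ℕ) (h : j ∈ ascSet d w) : 1 ≤ j ∧ j ≤ w.length :=
  ((mem_ascSet d w j).1 h).1

lemma ascSet_append (d : ℕ) (w : List ℕ) (a : ℕ) :
    ascSet d (w ++ [a]) =
      if w.length + 1 = 1 ∨ ent w w.length < a + d
      then insert (w.length + 1) (ascSet d w) else ascSet d w := by
  have hl : (w ++ [a]).length = w.length + 1 := by simp
  ext i
  constructor
  · intro hi
    obtain ⟨⟨h1, h2⟩, h3⟩ := (mem_ascSet _ _ _).1 hi
    rw [hl] at h2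
    by_cases hi' : i = w.length + 1
    · subst hi'
      have hc : w.length + 1 = 1 ∨ ent w w.length < a + d := by
        rcases h3 with h3 | h3
        · exact Or.inl h3
        · rcases Nat.eq_zero_or_pos w.length with h0 | h0
          · left; omega
          · right
            rw [ent_append_last] at h3
            rwa [show w.length + 1 - 1 = w.length from rfl,
              ent_append_le _ _ _ h0 le_rfl] at h3
      rw [if_pos hc]; exact Finset.mem_insert_self _ _
    · have h2' : i ≤ w.length := by omega
      have hmem : i ∈ ascSet d w := by
        rw [mem_ascSet]
        refine ⟨⟨h1, h2'⟩, ?_⟩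
        rcases h3 with h3 | h3
        · exact Or.inl h3
        · by_cases h1' : i = 1
          · exact Or.inl h1'
          · right
            rwa [ent_append_le _ _ _ h1 h2', ent_append_le _ _ _ (by omega) (by omega)] at h3
      split
      · exact Finset.mem_insert_of_mem hmem
      · exact hmem
  · intro hi
    rw [mem_ascSet, hl]
    split at hi
    · rename_i hc
      rcases Finset.mem_insert.1 hi with hi | hi
      · subst hi
        refine ⟨⟨by omega, le_rfl⟩, ?_⟩
        rcases hc with hc | hc
        · exact Or.inl hc
        · rcases Nat.eq_zero_or_pos w.length with h0 | h0
          · left; omega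
          · right
            rw [ent_append_last, show w.length + 1 - 1 = w.length from rfl]
            rwa [ent_append_le _ _ _ h0 le_rfl]
      · obtain ⟨⟨h1, h2⟩, h3⟩ := (mem_ascSet _ _ _).1 hi
        refine ⟨⟨h1, by omega⟩, ?_⟩
        rcases h3 with h3 | h3
        · exact Or.inl h3
        · by_cases h1' : i = 1
          · exact Or.inl h1'
          · right
            rwa [ent_append_le _ _ _ h1 h2, ent_append_le _ _ _ (by omega) (by omega)]
    · obtain ⟨⟨h1, h2⟩, h3⟩ := (mem_ascSet _ _ _).1 hi
      refine ⟨⟨h1, by omega⟩, ?_⟩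
      rcases h3 with h3 | h3
      · exact Or.inl h3
      · by_cases h1' : i = 1
        · exact Or.inl h1'
        · right
          rwa [ent_append_le _ _ _ h1 h2, ent_append_le _ _ _ (by omega) (by omega)]

lemma sort_insert_max (s : Finset ℕ) (m : ℕ) (h : ∀ x ∈ s, x < m) :
    (insert m s).sort (· ≤ ·) = s.sort (· ≤ ·) ++ [m] := by
  have hm : m ∉ s := fun hm => lt_irrefl m (h m hm)
  refine (fun hp hs => List.Perm.eq_of_pairwise' (Finset.pairwise_sort _ _) hs hp) ?_ ?_
  · exact ((Finset.sort_perm_toList _ _).trans ((Finset.toList_insert hm).trans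
      (((Finset.sort_perm_toList (r := (· ≤ ·)) (s := s)).symm.cons m).trans
        (List.perm_append_singleton _ _).symm)))
  · rw [List.pairwise_append]
    refine ⟨Finset.pairwise_sort _ _, List.pairwise_singleton _ _, ?_⟩
    intro x hx y hy
    rw [List.mem_singleton] at hy
    subst hy
    exact le_of_lt (h x ((Finset.mem_sort _).1 hx))

lemma Mstep_append (v : List ℕ) (a j : ℕ) (h1 : 1 ≤ j) (h2 : j ≤ v.length) :
    Mstep (v ++ [a]) j = Mstep v j ++ [a] := by
  have he : ent (v ++ [a]) j = ent v j := ent_append_le v a j h1 h2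
  apply List.ext_getElem
  · simp [Mstep]
  · intro n hn1 hn2
    simp only [Mstep] at hn1 hn2 ⊢
    rw [List.getElem_mapIdx]
    by_cases hn : n < v.length
    · rw [List.getElem_append_left hn, List.getElem_append_left (by simpa using hn),
        List.getElem_mapIdx, he]
    · have hn' : n = v.length := by
        simp at hn1; omega
      subst hn'
      rw [List.getElem_append_right (le_refl _), List.getElem_append_right (by simp)]
      have : ¬ (v.length + 1 < j) := by omega
      simp [this]

lemma foldl_Mstep_append (l : List ℕ) (v : List ℕ) (a : ℕ)
    (h : ∀ j ∈ l, 1 ≤ j ∧ j ≤ v.length) :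
    l.foldl Mstep (v ++ [a]) = l.foldl Mstep v ++ [a] := by
  induction l generalizing v with
  | nil => rfl
  | cons j t ih =>
    simp only [List.foldl_cons]
    rw [Mstep_append v a j (h j List.mem_cons_self).1 (h j List.mem_cons_self).2,
      ih (Mstep v j) (by simpa using fun j hj => h j (List.mem_cons_of_mem _ hj))]

lemma Mstep_last (v : List ℕ) (a : ℕ) :
    Mstep (v ++ [a]) (v.length + 1) = plus v a ++ [a] := by
  have he : ent (v ++ [a]) (v.length + 1) = a := ent_append_last v a
  apply List.ext_getElem
  · simp [Mstep, plus]
  · intro n hn1 hn2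
    simp only [Mstep] at hn1 hn2 ⊢
    rw [List.getElem_mapIdx]
    simp only [he]
    by_cases hn : n < v.length
    · rw [List.getElem_append_left hn, List.getElem_append_left (by simpa [plus] using hn)]
      simp only [plus]
      rw [List.getElem_map]
      have : n + 1 < v.length + 1 := by omega
      simp [this]
    · have hn' : n = v.length := by
        simp [Mstep] at hn1; omega
      subst hn'
      rw [List.getElem_append_right (le_refl _), List.getElem_append_right (by simp [plus])]
      have : ¬ (v.length + 1 < v.length + 1) := by omega
      simp [this, plus]

lemma hatd_append (d : ℕ) (w : List ℕ) (a : ℕ) :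
    hatd d (w ++ [a]) =
      if w.length + 1 = 1 ∨ ent w w.length < a + d
      then plus (hatd d w) a ++ [a]
      else hatd d w ++ [a] := by
  rw [hatd, ascSet_append]
  have hb : ∀ j ∈ (ascSet d w).sort (· ≤ ·), 1 ≤ j ∧ j ≤ w.length := by
    intro j hj
    exact ascSet_le d w j ((Finset.mem_sort _).1 hj)
  split
  · rw [sort_insert_max _ _ (fun x hx => by
      have := ascSet_le d w x hx; omega), List.foldl_append,
      foldl_Mstep_append _ _ _ hb]
    simp only [List.foldl_cons, List.foldl_nil]
    have h := Mstep_last (hatd d w) a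
    rw [length_hatd] at h
    exact h
  · rw [foldl_Mstep_append _ _ _ hb]
    rfl

lemma ent_plusApp (g : List ℕ) (a p : ℕ) (h1 : 1 ≤ p) (h2 : p ≤ g.length) :
    ent (plus g a ++ [a]) p = if a ≤ ent g p then ent g p + 1 else ent g p := by
  rw [ent_append_le _ _ _ h1 (by simp [plus]; omega), ent_eq, ent_eq, plus,
    List.getElem?_map]
  have : p - 1 < g.length := by omega
  rw [List.getElem?_eq_getElem this]
  simp

lemma ent_plusApp_last (g : List ℕ) (a : ℕ) :
    ent (plus g a ++ [a]) (g.length + 1) = a := by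
  have : (plus g a).length = g.length := by simp [plus]
  rw [← this, ent_append_last]

lemma ent_hatd (d : ℕ) (w : List ℕ) (i : ℕ) (h : w.length ≤ i) :
    ent (hatd d w) i = ent w i := by
  apply ent_foldl_Mstep
  intro j hj
  have := ascSet_le d w j ((Finset.mem_sort _).1 hj)
  omega

lemma main_lemma (d : ℕ) (w : List ℕ) : ascSet d (hatd d w) ⊆ nubSet (hatd d w) := by
  induction w using List.reverseRecOn with
  | nil =>
    have h0 : hatd d [] = [] := by
      have : ascSet d ([] : List ℕ) = ∅ := by
        simp [ascSet, Finset.Icc_eq_empty]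
      simp [hatd, this]
    rw [h0]
    intro i hi
    rw [mem_ascSet] at hi
    simp at hi
    omega
  | append_singleton w a IH =>
    set g := hatd d w with hgdef
    have hlen : g.length = w.length := length_hatd d w
    rw [hatd_append]
    split
    · rename_i hc
      -- g' = plus g a ++ [a]
      set g' := plus g a ++ [a] with hg'def
      have hlen' : g'.length = w.length + 1 := by simp [hg'def, plus, hlen]
      intro i hi
      obtain ⟨⟨h1, h2⟩, h3⟩ := (mem_ascSet _ _ _).1 hi
      rw [hlen'] at h2
      have hEnt : ∀ p, 1 ≤ p → p ≤ w.length →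
          ent g' p = if a ≤ ent g p then ent g p + 1 else ent g p := by
        intro p hp1 hp2
        exact ent_plusApp g a p hp1 (by omega)
      have hEntLast : ent g' (w.length + 1) = a := by
        rw [hg'def, ← hlen]; exact ent_plusApp_last g a
      rw [mem_nubSet, hlen']
      by_cases hiw : i = w.length + 1
      · subst hiw
        refine ⟨⟨by omega, le_rfl⟩, ?_⟩
        intro j hj1 hj2 hj3
        by_contra hlt
        push_neg at hlt
        have hj2' : j ≤ w.length := by omega
        rw [hEnt j hj1 hj2', hEntLast] at hj3
        split at hj3 <;> omega
      · have h2' : i ≤ w.length := by omega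
        have hig : i ∈ ascSet d g := by
          rw [mem_ascSet, hlen]
          refine ⟨⟨h1, h2'⟩, ?_⟩
          by_cases h1' : i = 1
          · exact Or.inl h1'
          · right
            rcases h3 with h3 | h3
            · exact absurd h3 h1'
            · rw [hEnt i h1 h2', hEnt (i-1) (by omega) (by omega)] at h3
              split at h3 <;> split at h3 <;> omega
        have := IH hig
        rw [mem_nubSet, hlen] at this
        refine ⟨⟨h1, by omega⟩, ?_⟩
        intro j hj1 hj2 hj3
        by_cases hjw : j = w.length + 1
        · omega
        · have hj2' : j ≤ w.length := by omega
          rw [hEnt j hj1 hj2', hEnt i h1 h2'] at hj3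
          refine this.2 j hj1 hj2' ?_
          split at hj3 <;> split at hj3 <;> omega
    · rename_i hc
      push_neg at hc
      obtain ⟨hc1, hc2⟩ := hc
      set g' := g ++ [a] with hg'def
      have hlen' : g'.length = w.length + 1 := by simp [hg'def, hlen]
      intro i hi
      obtain ⟨⟨h1, h2⟩, h3⟩ := (mem_ascSet _ _ _).1 hi
      rw [hlen'] at h2
      by_cases hiw : i = w.length + 1
      · exfalso
        subst hiw
        rcases h3 with h3 | h3
        · omega
        · rw [show w.length + 1 - 1 = w.length from rfl] at h3
          have hwpos : 1 ≤ w.length := by omega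
          rw [hg'def, ent_append_le _ _ _ hwpos (by omega)] at h3
          rw [← hlen, ent_append_last, hlen] at h3
          rw [ent_hatd d w w.length le_rfl] at h3
          omega
      · have h2' : i ≤ w.length := by omega
        have hig : i ∈ ascSet d g := by
          rw [mem_ascSet, hlen]
          refine ⟨⟨h1, h2'⟩, ?_⟩
          by_cases h1' : i = 1
          · exact Or.inl h1'
          · right
            rcases h3 with h3 | h3
            · exact absurd h3 h1'
            · rwa [ent_append_le _ _ _ h1 (by omega),
                ent_append_le _ _ _ (by omega) (by omega)] at h3
        have := IH hig
        rw [mem_nubSet, hlen] at this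
        rw [mem_nubSet, hlen']
        refine ⟨⟨h1, by omega⟩, ?_⟩
        intro j hj1 hj2 hj3
        by_cases hjw : j = w.length + 1
        · omega
        · have hj2' : j ≤ w.length := by omega
          rw [ent_append_le _ _ _ hj1 (by omega), ent_append_le _ _ _ h1 (by omega)] at hj3
          exact this.2 j hj1 hj2' hj3

/-- for every modified `d`-ascent sequence `γ`,
`Asc_d(γ) ⊆ nub(γ)`. -/
theorem stmt6 (d : ℕ) (g : List ℕ) (hg : ∃ w : List ℕ, IsDAscSeq d w ∧ g = hatd d w) :
    ascSet d g ⊆ nubSet g := by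
  obtain ⟨w, -, rfl⟩ := hg
  exact main_lemma d w
end
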